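/- Let G be a (P_5, HVN)-free graph containing an induced Y-5-wheel Σ (5-cycle v_1...v_5 plus vertex x adjacent to v_1, v_2, v_4) but no induced T-5-wheel. Let S be the set of vertices with no neighbour in Σ, and suppose |S| ≥ 2 and G[S] is connected. For i ≠ 4 let Y_{i,x} = {u : N_Σ(u) = {v_{i-2}, v_i, v_{i+2}, x}} and Y_4 = {u : N_Σ(u) = {v_2, v_4, v_1}} (indices mod 5). Then every vertex of Y_4 ∪ (⋃_{i≠4} Y_{i,x}) is either complete or anticomplete to S. -/

import Mathlib

open SimpleGraph

/-- The paw: a triangle 0,1,2 plus vertex 3 adjacent only to 0. -/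
def pawGraph : SimpleGraph (Fin 4) :=
  SimpleGraph.fromEdgeSet {s(0,1), s(0,2), s(1,2), s(0,3)}

/-- The HVN: a K₄ on 0,1,2,3 plus vertex 4 adjacent to exactly 0 and 1. -/
def hvnGraph : SimpleGraph (Fin 5) :=
  SimpleGraph.fromEdgeSet {s(0,1), s(0,2), s(0,3), s(1,2), s(1,3), s(2,3), s(4,0), s(4,1)}

/-- The T-5-wheel: 5-cycle 0-1-2-3-4-0 plus vertex 5 adjacent to the three consecutive
vertices 4, 0, 1. -/
def t5WheelGraph : SimpleGraph (Fin 6) :=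
  SimpleGraph.fromEdgeSet {s(0,1), s(1,2), s(2,3), s(3,4), s(4,0), s(5,4), s(5,0), s(5,1)}

/-- The Y-5-wheel: 5-cycle 0-1-2-3-4-0 plus vertex 5 adjacent to 0, 1, 3
(three non-consecutive vertices). -/
def y5WheelGraph : SimpleGraph (Fin 6) :=
  SimpleGraph.fromEdgeSet {s(0,1), s(1,2), s(2,3), s(3,4), s(4,0), s(5,0), s(5,1), s(5,3)}

/-- `G` contains an induced copy of `H`: an injection preserving and reflecting adjacency. -/
def ContainsInduced {V W : Type*} (G : SimpleGraph V) (H : SimpleGraph W) : Prop :=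
  ∃ f : W ↪ V, ∀ a b : W, H.Adj a b ↔ G.Adj (f a) (f b)

/-- `G` is `H`-free: no induced copy of `H`. -/
def InducedFree {V W : Type*} (G : SimpleGraph V) (H : SimpleGraph W) : Prop :=
  ¬ ContainsInduced G H

/-- `v` lists the vertices of an induced (chordless) 5-cycle of `G`, in order. -/
def IsInducedC5 {V : Type*} (G : SimpleGraph V) (v : ZMod 5 → V) : Prop :=
  Function.Injective v ∧ ∀ i j : ZMod 5, G.Adj (v i) (v j) ↔ (j = i + 1 ∨ j = i - 1)

/-- `v`, `x` form an induced Y-5-wheel: `v` is an induced 5-cycle and the extra vertex `x`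
is adjacent to exactly `v 0`, `v 1`, `v 3` (the pattern v₁, v₂, v₄). -/
def IsInducedY5Wheel {V : Type*} (G : SimpleGraph V) (v : ZMod 5 → V) (x : V) : Prop :=
  IsInducedC5 G v ∧ (∀ i, x ≠ v i) ∧
    ∀ i : ZMod 5, G.Adj x (v i) ↔ (i = 0 ∨ i = 1 ∨ i = 3)

/-- The neighbourhood of `u` on the wheel `Σ` with cycle vertices `v i` and hub `x`. -/
def wheelNbhd {V : Type*} (G : SimpleGraph V) (v : ZMod 5 → V) (x : V) (u : V) : Set V :=
  {w | (w = x ∨ ∃ i, w = v i) ∧ G.Adj u w}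

/-! A vertex `u` with a neighbour `a` and a non-neighbour `b` on an edge `ab` of the cycle, which
is neither complete nor anticomplete to the connected set `S` of vertices far from the wheel,
sees one end `s` of some edge `st` of `G[S]` but not the other; then `t s u a b` is an induced
`P₅`. Every vertex of `Y₄` or of some `Y_{i,x}` has such an edge `v i v (i+1)` on the cycle. -/

lemma containsInduced_pathGraph_five {V : Type*} {G : SimpleGraph V} {a b c d e : V}
    (hab : G.Adj a b) (hbc : G.Adj b c) (hcd : G.Adj c d) (hde : G.Adj d e)
    (hac : ¬G.Adj a c) (had : ¬G.Adj a d) (hae : ¬G.Adj a e)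
    (hbd : ¬G.Adj b d) (hbe : ¬G.Adj b e) (hce : ¬G.Adj c e) :
    ContainsInduced G (pathGraph 5) := by
  have hadj : ∀ i j : Fin 5,
      (pathGraph 5).Adj i j ↔ G.Adj (![a, b, c, d, e] i) (![a, b, c, d, e] j) := by
    intro i j
    fin_cases i <;> fin_cases j <;> simp [pathGraph_adj, hab, hbc, hcd, hde, hab.symm, hbc.symm,
      hcd.symm, hde.symm, hac, had, hae, hbd, hbe, hce, G.adj_comm _ a, G.adj_comm _ b,
      G.adj_comm _ c]
  refine ⟨⟨![a, b, c, d, e], fun i j hij => ?_⟩, hadj⟩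
  have hnbhd : ∀ k, (pathGraph 5).Adj i k ↔ (pathGraph 5).Adj j k := fun k => by
    rw [hadj, hadj, hij]
  have hdistinct :
      ∀ i j : Fin 5, (∀ k, (pathGraph 5).Adj i k ↔ (pathGraph 5).Adj j k) → i = j := by
    simp only [pathGraph_adj]; decide
  exact hdistinct i j hnbhd

lemma adj_all_or_none_of_preconnected {V : Type*} {G : SimpleGraph V}
    (hP5 : InducedFree G (pathGraph 5)) {u a b : V} (hab : G.Adj a b) (hua : G.Adj u a)
    (hub : ¬G.Adj u b) {S : Set V} (hS : (G.induce S).Preconnected)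
    (hSab : ∀ s ∈ S, ¬G.Adj s a ∧ ¬G.Adj s b) :
    (∀ s ∈ S, G.Adj u s) ∨ (∀ s ∈ S, ¬G.Adj u s) := by
  by_contra! ⟨⟨t, htS, hut⟩, s, hsS, hus⟩
  obtain ⟨d, -, hd_fst, hd_snd⟩ :=
    (hS ⟨s, hsS⟩ ⟨t, htS⟩).some.exists_boundary_dart {w : S | G.Adj u w} hus hut
  obtain ⟨hs'a, hs'b⟩ := hSab _ d.fst.2
  obtain ⟨ht'a, ht'b⟩ := hSab _ d.snd.2
  exact hP5 (containsInduced_pathGraph_five d.adj.symm hd_fst.symm hua hab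
    (fun h => hd_snd h.symm) ht'a ht'b hs'a hs'b hub)

section Wheel

variable {V : Type*} {G : SimpleGraph V} {v : ZMod 5 → V} {x u : V}

lemma adj_iff_mem_wheelNbhd (i : ZMod 5) : G.Adj u (v i) ↔ v i ∈ wheelNbhd G v x u :=
  ⟨fun h => ⟨Or.inr ⟨i, rfl⟩, h⟩, And.right⟩

lemma not_adj_of_wheelNbhd_eq_empty (hu : wheelNbhd G v x u = ∅) (i : ZMod 5) :
    ¬G.Adj u (v i) := by
  rw [adj_iff_mem_wheelNbhd (x := x), hu]
  exact Set.notMem_empty _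

lemma exists_adj_not_adj_succ (hW : IsInducedY5Wheel G v x)
    (hu : wheelNbhd G v x u = {v 1, v 3, v 0} ∨
      ∃ i : ZMod 5, wheelNbhd G v x u = {v (i - 2), v i, v (i + 2), x}) :
    ∃ i, G.Adj u (v i) ∧ ¬G.Adj u (v (i + 1)) := by
  simp only [adj_iff_mem_wheelNbhd (x := x)]
  obtain ⟨⟨hinj, -⟩, hxv, -⟩ := hW
  rcases hu with hu | ⟨i, hu⟩ <;> rw [hu]
  · refine ⟨3, by simp, ?_⟩
    simp [hinj.eq_iff]; decide
  · refine ⟨i, by simp, ?_⟩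
    simp only [Set.mem_insert_iff, Set.mem_singleton_iff, hinj.eq_iff, not_or]
    refine ⟨?_, ?_, ?_, (hxv _).symm⟩ <;> clear hu <;> revert i <;> decide

end Wheel

theorem y_complete_or_anticomplete_general {V : Type*} (G : SimpleGraph V)
    (hP5 : InducedFree G (pathGraph 5))
    (v : ZMod 5 → V) (x : V) (hW : IsInducedY5Wheel G v x)
    (S : Set V) (hS : S = {u : V | wheelNbhd G v x u = (∅ : Set V)})
    (hSconn : (G.induce S).Connected) :
    ∀ u, (wheelNbhd G v x u = {v 1, v 3, v 0} ∨
          ∃ i : ZMod 5, i ≠ 3 ∧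
            wheelNbhd G v x u = {v (i - 2), v i, v (i + 2), x}) →
      (∀ s ∈ S, G.Adj u s) ∨ (∀ s ∈ S, ¬ G.Adj u s) := by
  intro u hu
  obtain ⟨i, hui, hui'⟩ :=
    exists_adj_not_adj_succ hW (hu.imp_right fun ⟨i, _, h⟩ => ⟨i, h⟩)
  have hcycle_edge : G.Adj (v i) (v (i + 1)) := (hW.1.2 i (i + 1)).2 (Or.inl rfl)
  subst hS
  exact adj_all_or_none_of_preconnected hP5 hcycle_edge hui hui' hSconn.preconnected
    fun s hs => ⟨not_adj_of_wheelNbhd_eq_empty hs i, not_adj_of_wheelNbhd_eq_empty hs (i + 1)⟩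

/-- In a (P₅, HVN, T-5-wheel)-free graph with an induced Y-5-wheel Σ, if the set `S` of
vertices with no neighbour in Σ has at least two vertices and induces a connected subgraph,
then every vertex of `Y₄ ∪ ⋃_{i ≠ 4} Y_{i,x}` is complete or anticomplete to `S`. -/
theorem y_complete_or_anticomplete {V : Type*} (G : SimpleGraph V)
    (hP5 : InducedFree G (pathGraph 5)) (hHVN : InducedFree G hvnGraph)
    (hT5 : InducedFree G t5WheelGraph)
    (v : ZMod 5 → V) (x : V) (hW : IsInducedY5Wheel G v x)
    (S : Set V) (hS : S = {u : V | wheelNbhd G v x u = (∅ : Set V)})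
    (hS2 : S.Nontrivial) (hSconn : (G.induce S).Connected) :
    ∀ u, (wheelNbhd G v x u = {v 1, v 3, v 0} ∨
          ∃ i : ZMod 5, i ≠ 3 ∧
            wheelNbhd G v x u = {v (i - 2), v i, v (i + 2), x}) →
      (∀ s ∈ S, G.Adj u s) ∨ (∀ s ∈ S, ¬ G.Adj u s) :=
  y_complete_or_anticomplete_general G hP5 v x hW S hS hSconn
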